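/- B is invertible and B⁻¹ = M; equivalently, B·M equals the (p+3)×(p+3) identity matrix. -/

import Mathlib

/-- The Neumann–Zagier matrix `𝐁` (w.r.t. the preferred longitude) of the ideal
triangulation `X_n` of a hyperbolic twist knot complement for odd `n`
(rows/columns `1, …, p+3` of the paper are indexed here by `0, …, p+2`). -/
def Bodd (p : ℕ) : Matrix (Fin (p + 3)) (Fin (p + 3)) ℚ :=
  Matrix.of fun i j =>
    if i.1 = 0 then (if j.1 = p + 2 then -1 else 0)
    else if i.1 = 1 then (if j.1 = 0 then -1 else if j.1 = p + 2 then 1 else 0)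
    else if i.1 ≤ p then
      (if j.1 + 3 = i.1 then -1
       else if j.1 + 2 = i.1 then 2
       else if j.1 + 1 = i.1 then -1 else 0)
    else if i.1 = p + 1 then
      (if j.1 + 1 = p then -1 else if j.1 = p then 1 else if j.1 = p + 1 then 1 else 0)
    else (if j.1 = p + 1 then 2 else if j.1 = p + 2 then 2 else 0)

/-- The claimed inverse `M = 𝐁⁻¹` for odd `n`. -/
def Modd (p : ℕ) : Matrix (Fin (p + 3)) (Fin (p + 3)) ℚ :=
  Matrix.of fun i j =>
    if i.1 < p then
      (if j.1 ≤ 1 then -((i.1 : ℚ) + 1)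
       else if 2 ≤ j.1 ∧ j.1 ≤ i.1 + 1 then -((i.1 : ℚ) + 2 - (j.1 : ℚ))
       else 0)
    else if i.1 = p then
      (if j.1 = 0 then -((p : ℚ) + 1)
       else if j.1 = 1 then -(p : ℚ)
       else if 2 ≤ j.1 ∧ j.1 ≤ p then -((p : ℚ) + 1 - (j.1 : ℚ))
       else if j.1 = p + 1 then 1
       else if j.1 = p + 2 then -1/2
       else 0)
    else if i.1 = p + 1 then
      (if j.1 = 0 then 1 else if j.1 = p + 2 then 1/2 else 0)
    else (if j.1 = 0 then -1 else 0)


/-!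
Row `i` of `B * M` is the combination of rows of `M` with the coefficients of row `i` of `B`.
For `k < p`, row `k` of `M` is the truncated ramp `j ↦ -(k + 2 - max j 1)₊`, and second
differences of truncated ramps are unit vectors; this handles the tridiagonal rows `2, …, p`
of `B`.
Row `p` of `M` is row `p - 1` corrected by three unit vectors and rows `p + 1`, `p + 2` are
combinations of unit vectors, so the remaining four rows of `B` reduce to linear algebra in the
standard basis.
-/

open Matrix

variable {p : ℕ}

lemma Nat.cast_tsub_second_diff {R : Type*} [Ring R] (x m : ℕ) :
    ((x - 1 - m : ℕ) : R) - 2 * (x - m : ℕ) + (x + 1 - m : ℕ) = if x = m then 1 else 0 := by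
  have key : ((x - 1 - m : ℕ) : ℤ) - 2 * (x - m : ℕ) + (x + 1 - m : ℕ) =
      if x = m then 1 else 0 := by
    split_ifs <;> omega
  exact_mod_cast congrArg (Int.cast : ℤ → R) key

/-- For `j ≤ 1` the truncated subtraction is `k + 1`; for `j ≥ 2` it is `max (k + 2 - j) 0`. -/
lemma Modd_apply_of_lt {k : ℕ} (hk : k < p) (j : Fin (p + 3)) :
    Modd p ⟨k, by omega⟩ j = -((k + 2 - max j.1 1 : ℕ) : ℚ) := by
  simp only [Modd, of_apply, if_pos hk]
  split_ifs with h1 h2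
  · rw [max_eq_right h1, Nat.cast_sub (by omega)]; push_cast; ring
  · rw [max_eq_left (by omega), Nat.cast_sub (by omega)]; push_cast; ring
  · rw [Nat.sub_eq_zero_of_le (by omega)]; simp

lemma Modd_row_zero (hp : 1 ≤ p) :
    Modd p ⟨0, by omega⟩ = -Pi.single ⟨0, by omega⟩ 1 - Pi.single ⟨1, by omega⟩ 1 := by
  ext j
  simp only [Modd_apply_of_lt hp, Pi.sub_apply, Pi.neg_apply, Pi.single_apply, Fin.ext_iff]
  split_ifs <;> first | omega | (rw [Nat.sub_eq_zero_of_le (by omega)]; simp) | simp [*]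

lemma Modd_row_self (hp : 1 ≤ p) :
    Modd p ⟨p, by omega⟩ =
      Modd p ⟨p - 1, by omega⟩ - Pi.single ⟨0, by omega⟩ 1
        + Pi.single ⟨p + 1, by omega⟩ 1 - (1 / 2 : ℚ) • Pi.single ⟨p + 2, by omega⟩ 1 := by
  ext j
  simp only [Pi.sub_apply, Pi.add_apply, Pi.smul_apply, smul_eq_mul,
    Modd_apply_of_lt (show p - 1 < p by omega), Pi.single_apply, Fin.ext_iff]
  simp only [Modd, of_apply, lt_irrefl, if_false, if_true, show p - 1 + 2 = p + 1 by omega]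
  split_ifs <;> try omega
  · simp [*]; ring
  · simp [*]
  · rw [max_eq_left (by omega), Nat.cast_sub (by omega)]; push_cast; ring
  · rw [Nat.sub_eq_zero_of_le (by omega)]; simp
  · rw [Nat.sub_eq_zero_of_le (by omega)]; norm_num

lemma Modd_row_succ :
    Modd p ⟨p + 1, by omega⟩ =
      Pi.single ⟨0, by omega⟩ 1 + (1 / 2 : ℚ) • Pi.single ⟨p + 2, by omega⟩ 1 := by
  ext j
  simp only [Modd, of_apply, Pi.add_apply, Pi.smul_apply, smul_eq_mul, Pi.single_apply,
    Fin.ext_iff]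
  split_ifs <;> first | omega | norm_num

lemma Modd_row_succ_succ : Modd p ⟨p + 2, by omega⟩ = -Pi.single ⟨0, by omega⟩ 1 := by
  ext j
  simp only [Modd, of_apply, Pi.neg_apply, Pi.single_apply, Fin.ext_iff]
  split_ifs <;> first | omega | norm_num

lemma Bodd_row_zero_vecMul_Modd :
    Bodd p ⟨0, by omega⟩ ᵥ* Modd p = Pi.single ⟨0, by omega⟩ 1 := by
  have hrow : Bodd p ⟨0, by omega⟩ = Pi.single ⟨p + 2, by omega⟩ (-1) := by
    ext k
    simp only [Bodd, of_apply, Pi.single_apply, Fin.ext_iff, ↓reduceIte]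
  simp only [hrow, single_vecMul, row_def, Modd_row_succ_succ]
  module

lemma Bodd_row_one_vecMul_Modd (hp : 1 ≤ p) :
    Bodd p ⟨1, by omega⟩ ᵥ* Modd p = Pi.single ⟨1, by omega⟩ 1 := by
  have hrow : Bodd p ⟨1, by omega⟩ =
      Pi.single ⟨0, by omega⟩ (-1) + Pi.single ⟨p + 2, by omega⟩ 1 := by
    ext k
    simp only [Bodd, of_apply, Pi.add_apply, Pi.single_apply, Fin.ext_iff, Nat.reduceEqDiff,
      ↓reduceIte]
    split_ifs <;> first | omega | norm_num
  simp only [hrow, add_vecMul, single_vecMul, row_def, Modd_row_zero hp, Modd_row_succ_succ]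
  module

lemma Bodd_row_two_vecMul_Modd (hp : 2 ≤ p) :
    Bodd p ⟨2, by omega⟩ ᵥ* Modd p = Pi.single ⟨2, by omega⟩ 1 := by
  have hrow : Bodd p ⟨2, by omega⟩ =
      Pi.single ⟨0, by omega⟩ 2 + Pi.single ⟨1, by omega⟩ (-1) := by
    ext k
    simp only [Bodd, of_apply, Pi.add_apply, Pi.single_apply, Fin.ext_iff, Nat.reduceEqDiff,
      ↓reduceIte]
    split_ifs <;> first | omega | norm_num
  ext j
  have h := Nat.cast_tsub_second_diff (R := ℚ) 2 (max j.1 1)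
  rw [Nat.sub_eq_zero_of_le (show 2 - 1 ≤ max j.1 1 by omega)] at h
  simp only [hrow, add_vecMul, single_vecMul, row_def, Pi.add_apply, Pi.smul_apply,
    Modd_apply_of_lt (show 0 < p by omega), Modd_apply_of_lt (show 1 < p by omega),
    Pi.single_apply, Fin.ext_iff, smul_eq_mul]
  split_ifs at h ⊢ <;> first | omega | (push_cast at h ⊢; linarith)

lemma Bodd_row_vecMul_Modd_of_three_le {k : ℕ} (hk3 : 3 ≤ k) (hkp : k ≤ p) :
    Bodd p ⟨k, by omega⟩ ᵥ* Modd p = Pi.single ⟨k, by omega⟩ 1 := by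
  have hrow : Bodd p ⟨k, by omega⟩ = Pi.single ⟨k - 3, by omega⟩ (-1)
      + Pi.single ⟨k - 2, by omega⟩ 2 + Pi.single ⟨k - 1, by omega⟩ (-1) := by
    ext l
    simp only [Bodd, of_apply, Pi.add_apply, Pi.single_apply, Fin.ext_iff]
    split_ifs <;> first | omega | norm_num
  ext j
  have h := Nat.cast_tsub_second_diff (R := ℚ) k (max j.1 1)
  simp only [hrow, add_vecMul, single_vecMul, row_def, Pi.add_apply, Pi.smul_apply,
    Modd_apply_of_lt (show k - 3 < p by omega), Modd_apply_of_lt (show k - 2 < p by omega),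
    Modd_apply_of_lt (show k - 1 < p by omega), Pi.single_apply, Fin.ext_iff, smul_eq_mul,
    show k - 3 + 2 = k - 1 by omega, show k - 2 + 2 = k by omega,
    show k - 1 + 2 = k + 1 by omega]
  split_ifs at h ⊢ <;> first | omega | linarith

lemma Bodd_row_succ_vecMul_Modd (hp : 1 ≤ p) :
    Bodd p ⟨p + 1, by omega⟩ ᵥ* Modd p = Pi.single ⟨p + 1, by omega⟩ 1 := by
  have hrow : Bodd p ⟨p + 1, by omega⟩ = Pi.single ⟨p - 1, by omega⟩ (-1)
      + Pi.single ⟨p, by omega⟩ 1 + Pi.single ⟨p + 1, by omega⟩ 1 := by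
    ext k
    simp only [Bodd, of_apply, Pi.add_apply, Pi.single_apply, Fin.ext_iff, Nat.reduceEqDiff,
      ↓reduceIte]
    split_ifs <;> first | omega | norm_num
  simp only [hrow, add_vecMul, single_vecMul, row_def, Modd_row_self hp, Modd_row_succ]
  module

lemma Bodd_row_succ_succ_vecMul_Modd :
    Bodd p ⟨p + 2, by omega⟩ ᵥ* Modd p = Pi.single ⟨p + 2, by omega⟩ 1 := by
  have hrow : Bodd p ⟨p + 2, by omega⟩ =
      Pi.single ⟨p + 1, by omega⟩ 2 + Pi.single ⟨p + 2, by omega⟩ 2 := by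
    ext k
    simp only [Bodd, of_apply, Pi.add_apply, Pi.single_apply, Fin.ext_iff, Nat.reduceEqDiff,
      ↓reduceIte]
    split_ifs <;> first | omega | norm_num
  simp only [hrow, add_vecMul, single_vecMul, row_def, Modd_row_succ, Modd_row_succ_succ]
  module

theorem stmt_13 (p : ℕ) (hp : 2 ≤ p) : Bodd p * Modd p = 1 := by
  ext ⟨k, hk⟩ j
  rw [one_eq_pi_single, mul_apply_eq_vecMul]
  suffices Bodd p ⟨k, hk⟩ ᵥ* Modd p = Pi.single ⟨k, hk⟩ 1 from congrFun this j
  have hp1 : 1 ≤ p := one_le_two.trans hp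
  obtain rfl | rfl | rfl | ⟨hk3, hkp⟩ | rfl | rfl :
      k = 0 ∨ k = 1 ∨ k = 2 ∨ (3 ≤ k ∧ k ≤ p) ∨ k = p + 1 ∨ k = p + 2 := by omega
  · exact Bodd_row_zero_vecMul_Modd
  · exact Bodd_row_one_vecMul_Modd hp1
  · exact Bodd_row_two_vecMul_Modd hp
  · exact Bodd_row_vecMul_Modd_of_three_le hk3 hkp
  · exact Bodd_row_succ_vecMul_Modd hp1
  · exact Bodd_row_succ_succ_vecMul_Modd
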